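/- arXiv:1303.5349 — 6 statements merged into one kernel-verified Lean document; each statement's English description precedes it below -/
import Mathlib

section
/- Let n ≥ 1 and let a : Fin (n+1) → ℝ be strictly increasing with a 0 > 0 (so all a i are positive and pairwise distinct). Let Z : Fin (n+1) → ℂ be nonzero. Then Z satisfies the critical point equations for the quadric section s = Σ_j a_j Z_j² of O(2) over ℂP^n, namely a_i · Z_i · (Σ_j |Z_j|²) = (Σ_j a_j Z_j²) · conj(Z_i) for every i, if and only if exactly one coordinate of Z is nonzero. (Equivalently: the critical points of s on ℂP^n are exactly the n+1 coordinate points p_0, …, p_n.) -/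
open Complex Finset
open scoped ComplexConjugate

/-!
At a critical point, taking absolute values in the `i`-th equation and cancelling `|Z i|` gives
`|a i| · ‖Z‖² = |Σ_j a_j Z_j²|` for every `i` in the support of `Z`. The right-hand side does not
depend on `i`, so distinct `|a i|` force the support to be a single point; conversely the
equations hold trivially at a coordinate point.
-/

section

variable {ι : Type*} [Fintype ι]

def IsQuadricCritical (a Z : ι → ℂ) : Prop :=
  ∀ i, a i * Z i * ∑ j, (normSq (Z j) : ℂ) = (∑ j, a j * Z j ^ 2) * conj (Z i)

theorem IsQuadricCritical.norm_mul_sum_normSq_eq {a Z : ι → ℂ} (h : IsQuadricCritical a Z)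
    {i : ι} (hi : Z i ≠ 0) : ‖a i‖ * ∑ j, normSq (Z j) = ‖∑ j, a j * Z j ^ 2‖ := by
  have hnorm := congrArg norm (h i)
  rw [← ofReal_sum, norm_mul, norm_mul, norm_mul, norm_conj,
    Complex.norm_of_nonneg (sum_nonneg fun j _ => normSq_nonneg (Z j))] at hnorm
  exact mul_right_cancel₀ (norm_ne_zero_iff.2 hi) (by linear_combination hnorm)

theorem isQuadricCritical_of_forall_ne_eq_zero (a : ι → ℂ) {Z : ι → ℂ} {i₀ : ι}
    (hZ : ∀ j ≠ i₀, Z j = 0) : IsQuadricCritical a Z := by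
  intro i
  have hnormSq : ∑ j, (normSq (Z j) : ℂ) = normSq (Z i₀) :=
    Fintype.sum_eq_single i₀ fun j hj => by simp [hZ j hj]
  have hquad : ∑ j, a j * Z j ^ 2 = a i₀ * Z i₀ ^ 2 :=
    Fintype.sum_eq_single i₀ fun j hj => by simp [hZ j hj]
  rw [hnormSq, hquad]
  rcases eq_or_ne i i₀ with rfl | hne
  · rw [← mul_conj]; ring
  · simp [hZ i hne]

theorem isQuadricCritical_iff_existsUnique_ne_zero {a Z : ι → ℂ}
    (ha : Function.Injective fun i => ‖a i‖) (hZ : Z ≠ 0) :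
    IsQuadricCritical a Z ↔ ∃! i, Z i ≠ 0 := by
  constructor
  · intro h
    obtain ⟨i₀, hi₀⟩ := Function.ne_iff.1 hZ
    have hpos : 0 < ∑ j, normSq (Z j) :=
      sum_pos' (fun j _ => normSq_nonneg (Z j)) ⟨i₀, mem_univ _, normSq_pos.2 hi₀⟩
    refine ⟨i₀, hi₀, fun i hi => ha ?_⟩
    exact mul_right_cancel₀ hpos.ne'
      ((h.norm_mul_sum_normSq_eq hi).trans (h.norm_mul_sum_normSq_eq hi₀).symm)
  · rintro ⟨i₀, -, huniq⟩
    exact isQuadricCritical_of_forall_ne_eq_zero a fun j hj => not_not.1 (mt (huniq j) hj)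

end

theorem quadric_critical_points_general (n : ℕ) (a : Fin (n + 1) → ℝ)
    (ha : StrictMono a) (ha0 : 0 < a 0) (Z : Fin (n + 1) → ℂ) (hZ : Z ≠ 0) :
    (∀ i, (a i : ℂ) * Z i * (∑ j, (Complex.normSq (Z j) : ℂ)) =
        (∑ j, (a j : ℂ) * Z j ^ 2) * (starRingEnd ℂ) (Z i)) ↔
      ∃! i, Z i ≠ 0 := by
  have hpos : ∀ i, 0 < a i := fun i => ha0.trans_le (ha.monotone (Fin.zero_le i))
  have hnorm_inj : Function.Injective fun i => ‖(a i : ℂ)‖ := fun i j hij =>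
    ha.injective (by simpa [abs_of_pos (hpos i), abs_of_pos (hpos j)] using hij)
  exact isQuadricCritical_iff_existsUnique_ne_zero hnorm_inj hZ

/-- The critical points of the quadric section `s = Σ_j a_j Z_j²` of `O(2)` over `ℂP^n`
(with `a` strictly increasing and positive) are exactly the coordinate points:
a nonzero `Z` satisfies the critical point equations iff exactly one coordinate is nonzero. -/
theorem quadric_critical_points (n : ℕ) (hn : 1 ≤ n) (a : Fin (n + 1) → ℝ)
    (ha : StrictMono a) (ha0 : 0 < a 0) (Z : Fin (n + 1) → ℂ) (hZ : Z ≠ 0) :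
    (∀ i, (a i : ℂ) * Z i * (∑ j, (Complex.normSq (Z j) : ℂ)) =
        (∑ j, (a j : ℂ) * Z j ^ 2) * (starRingEnd ℂ) (Z i)) ↔
      ∃! i, Z i ≠ 0 :=
  quadric_critical_points_general n a ha ha0 Z hZ
end

section
/- Let n ≥ 1 and let a : Fin (n+1) → ℝ be strictly increasing with a 0 > 0. Suppose z : Fin n → ℂ satisfies, for every i ∈ Fin n, the equation (1 + Σ_{j} |z_j|²) · a_{i+1} · z_i = (a_0 + Σ_{j} a_{j+1} · z_j²) · conj(z_i). Then z = 0. (In the affine chart U_0 = {Z_0 ≠ 0} of ℂP^n with coordinates z_i = Z_i/Z_0, the origin is the only critical point of the quadric section s = Σ_j a_j Z_j² of O(2).) -/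
open Complex Finset
open scoped ComplexConjugate

/-!
Multiplying the `i`-th equation by `z i` and summing over `i` shows that the critical value
`c + ∑ b_j z_j²` equals `(1 + ‖z‖²) c`. Cancelling the positive factor `1 + ‖z‖²`, each equation
becomes `b_i z_i = c · conj z_i`, which for real `b_i ≠ ±c` forces `z_i = 0`.
-/

section CriticalPoint

variable {ι : Type*} [Fintype ι] {b : ι → ℂ} {c : ℂ} {z : ι → ℂ}

theorem one_add_sum_normSq_ne_zero (z : ι → ℂ) : (1 + ∑ j, (normSq (z j) : ℂ)) ≠ 0 := by
  have hpos : (0 : ℝ) < 1 + ∑ j, normSq (z j) :=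
    add_pos_of_pos_of_nonneg one_pos (sum_nonneg fun j _ => normSq_nonneg _)
  exact_mod_cast hpos.ne'

theorem critical_value_eq
    (hz : ∀ i, (1 + ∑ j, (normSq (z j) : ℂ)) * b i * z i =
      (c + ∑ j, b j * z j ^ 2) * conj (z i)) :
    c + ∑ j, b j * z j ^ 2 = (1 + ∑ j, (normSq (z j) : ℂ)) * c := by
  have hsum : (1 + ∑ j, (normSq (z j) : ℂ)) * ∑ j, b j * z j ^ 2 =
      (c + ∑ j, b j * z j ^ 2) * ∑ j, (normSq (z j) : ℂ) := by
    rw [mul_sum, mul_sum]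
    refine sum_congr rfl fun j _ => ?_
    rw [normSq_eq_conj_mul_self]
    linear_combination z j * hz j
  linear_combination hsum

theorem mul_eq_mul_conj_of_critical
    (hz : ∀ i, (1 + ∑ j, (normSq (z j) : ℂ)) * b i * z i =
      (c + ∑ j, b j * z j ^ 2) * conj (z i)) (i : ι) :
    b i * z i = c * conj (z i) := by
  apply mul_left_cancel₀ (one_add_sum_normSq_ne_zero z)
  linear_combination hz i + conj (z i) * critical_value_eq hz

end CriticalPoint

theorem eq_zero_of_ofReal_mul_eq_mul_conj {b c : ℝ} (hbc : b ≠ c) (hbc' : b ≠ -c) {w : ℂ}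
    (hw : (b : ℂ) * w = c * conj w) : w = 0 := by
  have hre : (b - c) * w.re = 0 := by
    have := congrArg re hw
    simp only [re_ofReal_mul, conj_re] at this
    linear_combination this
  have him : (b + c) * w.im = 0 := by
    have := congrArg im hw
    simp only [im_ofReal_mul, conj_im] at this
    linear_combination this
  apply Complex.ext
  · simpa [sub_ne_zero.mpr hbc] using hre
  · simpa [add_eq_zero_iff_eq_neg.not.mpr hbc'] using him

theorem quadric_critical_point_affine_chart_general (n : ℕ) (a : Fin (n + 1) → ℝ)
    (ha : StrictMono a) (ha0 : 0 < a 0) (z : Fin n → ℂ)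
    (hz : ∀ i : Fin n,
      ((1 : ℂ) + ∑ j, (Complex.normSq (z j) : ℂ)) * (a i.succ : ℂ) * z i =
        ((a 0 : ℂ) + ∑ j, (a j.succ : ℂ) * z j ^ 2) * (starRingEnd ℂ) (z i)) :
    z = 0 := by
  funext i
  have hlt : a 0 < a i.succ := ha (Fin.succ_pos i)
  exact eq_zero_of_ofReal_mul_eq_mul_conj hlt.ne' (by linarith)
    (mul_eq_mul_conj_of_critical (b := fun j => (a j.succ : ℂ)) hz i)

/-- In the affine chart `U_0 = {Z_0 ≠ 0}` of `ℂP^n`, the origin is the only critical point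
of the quadric section `s = Σ_j a_j Z_j²` of `O(2)`, for `a` strictly increasing with `a 0 > 0`. -/
theorem quadric_critical_point_affine_chart (n : ℕ) (hn : 1 ≤ n) (a : Fin (n + 1) → ℝ)
    (ha : StrictMono a) (ha0 : 0 < a 0) (z : Fin n → ℂ)
    (hz : ∀ i : Fin n,
      ((1 : ℂ) + ∑ j, (Complex.normSq (z j) : ℂ)) * (a i.succ : ℂ) * z i =
        ((a 0 : ℂ) + ∑ j, (a j.succ : ℂ) * z j ^ 2) * (starRingEnd ℂ) (z i)) :
    z = 0 :=
  quadric_critical_point_affine_chart_general n a ha ha0 z hz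
end

section
/- Let n ≥ 1 and let b : Fin n → ℝ with b_j > 0 and b_j ≠ 1 for all j. Let D be the n×n diagonal complex matrix with diagonal entries 2·i·b_j, and let J be the 2n×2n block matrix J = [[−2·I, D], [Dᴴ, −2·I]] (where Dᴴ is the conjugate transpose). Then J is Hermitian, J is invertible, and the number of negative eigenvalues of J, counted with multiplicity, equals n + #{j : b_j < 1}. (In particular, when all b_j > 1 the index is n; this computes the Morse index n + i of log|s|² at the critical point p_i of the quadric s = Σ a_j Z_j² with 0 < a_0 < ⋯ < a_n, where b_j = a_j/a_i.) -/
/-!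
Write `J = [[c, D], [Dᴴ, c]]` with `c = -2` and `D = diag(i β_j)`, `β_j = 2 b_j`. The matrix
`U = [[1, 1], [i, -i]]` (blocks are scalar) satisfies `J U = U · diag(c - β, c + β)`, so `J` has the
characteristic polynomial of a real diagonal matrix. For a Hermitian matrix the eigenvalues are the
roots of the characteristic polynomial with multiplicity, so they are `-2 - 2 b_j`, all negative,
and `-2 + 2 b_j`, negative exactly when `b_j < 1`; none vanishes since `b_j ≠ 1`.
-/

open Complex Matrix Polynomial

theorem Nat.card_subtype_comp_eq_countP_map {α ι : Type*} [Fintype ι] (f : ι → α) (p : α → Prop)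
    [DecidablePred p] : Nat.card {i // p (f i)} = (Finset.univ.val.map f).countP p := by
  rw [Multiset.countP_map, Nat.card_eq_fintype_card, Fintype.card_subtype]
  rfl

namespace Matrix

variable {n : Type*} [Fintype n] [DecidableEq n]

theorem charpoly_eq_of_mul_eq_mul {R : Type*} [CommRing R] {A B U : Matrix n n R} (hU : IsUnit U)
    (h : A * U = U * B) : A.charpoly = B.charpoly := by
  have hA : A = U * B * U⁻¹ := by
    rw [← h, Matrix.mul_assoc, mul_nonsing_inv _ ((isUnit_iff_isUnit_det U).mp hU), Matrix.mul_one]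
  rw [hA, charpoly_mul_comm, ← Matrix.mul_assoc,
    nonsing_inv_mul _ ((isUnit_iff_isUnit_det U).mp hU), Matrix.one_mul]

theorem det_eq_of_mul_eq_mul {R : Type*} [CommRing R] {A B U : Matrix n n R} (hU : IsUnit U)
    (h : A * U = U * B) : A.det = B.det := by
  have hdet : A.det * U.det = B.det * U.det := by rw [← det_mul, h, det_mul, mul_comm]
  exact ((isUnit_iff_isUnit_det U).mp hU).mul_left_injective hdet

variable {𝕜 : Type*} [RCLike 𝕜] {A : Matrix n n 𝕜}

theorem IsHermitian.map_eigenvalues_eq_of_charpoly_eq (hA : A.IsHermitian) {ι : Type*} [Fintype ι]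
    {d : ι → ℝ} (h : A.charpoly = ∏ i, (X - C (d i : 𝕜))) :
    Finset.univ.val.map hA.eigenvalues = Finset.univ.val.map d := by
  have hroots := hA.roots_charpoly_eq_eigenvalues
  rw [h, roots_prod _ _ (by simp [Finset.prod_ne_zero_iff, X_sub_C_ne_zero])] at hroots
  simpa [Multiset.map_map, Function.comp_def] using congrArg (Multiset.map RCLike.re) hroots.symm

theorem IsHermitian.card_subtype_eigenvalues_eq (hA : A.IsHermitian) {ι : Type*} [Fintype ι]
    {d : ι → ℝ} (h : A.charpoly = ∏ i, (X - C (d i : 𝕜))) (p : ℝ → Prop) :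
    Nat.card {i // p (hA.eigenvalues i)} = Nat.card {i // p (d i)} := by
  classical
  rw [Nat.card_subtype_comp_eq_countP_map, Nat.card_subtype_comp_eq_countP_map,
    hA.map_eigenvalues_eq_of_charpoly_eq h]

end Matrix

namespace QuadricHessian

variable {ι : Type*} [DecidableEq ι] (c : ℝ) (β : ι → ℝ)

def blockMatrix : Matrix (ι ⊕ ι) (ι ⊕ ι) ℂ :=
  fromBlocks ((c : ℂ) • 1) (diagonal fun j => I * β j) (diagonal fun j => I * β j)ᴴ ((c : ℂ) • 1)

def blockEigenvalues : ι ⊕ ι → ℝ :=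
  (fun j => c - β j) ⊕ᵥ (fun j => c + β j)

def blockEigenbasis : Matrix (ι ⊕ ι) (ι ⊕ ι) ℂ :=
  fromBlocks 1 1 (I • 1) (-I • 1)

theorem isHermitian_blockMatrix : (blockMatrix c β).IsHermitian :=
  IsHermitian.fromBlocks (by simp [IsHermitian]) rfl (by simp [IsHermitian])

variable [Fintype ι]

theorem isUnit_blockEigenbasis : IsUnit (blockEigenbasis (ι := ι)) := by
  rw [isUnit_iff_isUnit_det, blockEigenbasis, det_fromBlocks_one₁₁, Matrix.mul_one, ← sub_smul,
    det_smul, det_one, mul_one, isUnit_iff_ne_zero]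
  exact pow_ne_zero _ (by simp [sub_eq_add_neg, ← two_mul])

theorem blockMatrix_mul_blockEigenbasis :
    blockMatrix c β * blockEigenbasis =
      blockEigenbasis * diagonal fun i => (blockEigenvalues c β i : ℂ) := by
  have hdiag : (diagonal fun i => (blockEigenvalues c β i : ℂ)) =
      fromBlocks (diagonal fun j => ((c - β j : ℝ) : ℂ)) 0 0
        (diagonal fun j => ((c + β j : ℝ) : ℂ)) := by
    rw [fromBlocks_diagonal]
    congr 1
    ext (j | j) <;> rfl
  rw [hdiag, blockMatrix, blockEigenbasis, diagonal_conjTranspose]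
  simp only [smul_one_eq_diagonal, fromBlocks_multiply, Matrix.mul_one, Matrix.one_mul,
    diagonal_mul_diagonal, Matrix.mul_zero, add_zero, zero_add, diagonal_add, fromBlocks_inj,
    diagonal_eq_diagonal_iff]
  refine ⟨fun j => ?_, fun j => ?_, fun j => ?_, fun j => ?_⟩ <;>
    simp only [Pi.star_apply, star_mul', Complex.star_def, conj_I, conj_ofReal, ofReal_add,
      ofReal_sub] <;>
    ring_nf <;> simp only [I_sq] <;> ring

theorem charpoly_blockMatrix :
    (blockMatrix c β).charpoly = ∏ i, (X - C (blockEigenvalues c β i : ℂ)) := by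
  rw [charpoly_eq_of_mul_eq_mul isUnit_blockEigenbasis (blockMatrix_mul_blockEigenbasis c β),
    charpoly_diagonal]

theorem isUnit_blockMatrix (h : ∀ i, blockEigenvalues c β i ≠ 0) : IsUnit (blockMatrix c β) := by
  rw [isUnit_iff_isUnit_det,
    det_eq_of_mul_eq_mul isUnit_blockEigenbasis (blockMatrix_mul_blockEigenbasis c β), det_diagonal,
    isUnit_iff_ne_zero, Finset.prod_ne_zero_iff]
  exact fun i _ => ofReal_ne_zero.mpr (h i)

end QuadricHessian

open QuadricHessian

theorem quadric_hessian_index_general (n : ℕ) (b : Fin n → ℝ)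
    (hb : ∀ j, 0 < b j) (hb1 : ∀ j, b j ≠ 1)
    (D : Matrix (Fin n) (Fin n) ℂ)
    (hD : D = Matrix.diagonal fun j => 2 * Complex.I * (b j : ℂ))
    (J : Matrix (Fin n ⊕ Fin n) (Fin n ⊕ Fin n) ℂ)
    (hJ : J = Matrix.fromBlocks ((-2 : ℂ) • 1) D Dᴴ ((-2 : ℂ) • 1)) :
    ∃ hHerm : J.IsHermitian, IsUnit J ∧
      Nat.card {i // hHerm.eigenvalues i < 0} = n + Nat.card {j // b j < 1} := by
  obtain rfl : J = blockMatrix (-2) (fun j => 2 * b j) := by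
    rw [hJ, hD, blockMatrix]
    push_cast
    simp only [mul_comm I, mul_assoc]
  have hHerm := isHermitian_blockMatrix (-2) (fun j => 2 * b j)
  refine ⟨hHerm, isUnit_blockMatrix _ _ ?_, ?_⟩
  · rintro (j | j) <;> simp only [blockEigenvalues, Sum.elim_inl, Sum.elim_inr]
    · linarith [hb j]
    · exact fun h => hb1 j (by linarith)
  rw [hHerm.card_subtype_eigenvalues_eq (charpoly_blockMatrix _ _) (· < 0),
    Nat.card_congr Equiv.subtypeSum, Nat.card_sum]
  congr 1
  · rw [Nat.card_congr (Equiv.subtypeUnivEquiv fun j => show -2 - 2 * b j < 0 by linarith [hb j]),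
      Nat.card_fin]
  · exact Nat.card_congr <| Equiv.subtypeEquivRight fun j =>
      show -2 + 2 * b j < 0 ↔ b j < 1 by constructor <;> intro <;> linarith

/-- For `b : Fin n → ℝ` positive with `b j ≠ 1`, the block matrix
`J = [[−2I, D], [Dᴴ, −2I]]` with `D = diag(2i b_j)` is Hermitian and invertible, and
its number of negative eigenvalues (with multiplicity) is `n + #{j | b j < 1}`. -/
theorem quadric_hessian_index (n : ℕ) (hn : 1 ≤ n) (b : Fin n → ℝ)
    (hb : ∀ j, 0 < b j) (hb1 : ∀ j, b j ≠ 1)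
    (D : Matrix (Fin n) (Fin n) ℂ)
    (hD : D = Matrix.diagonal fun j => 2 * Complex.I * (b j : ℂ))
    (J : Matrix (Fin n ⊕ Fin n) (Fin n ⊕ Fin n) ℂ)
    (hJ : J = Matrix.fromBlocks ((-2 : ℂ) • 1) D Dᴴ ((-2 : ℂ) • 1)) :
    ∃ hHerm : J.IsHermitian, IsUnit J ∧
      Nat.card {i // hHerm.eigenvalues i < 0} = n + Nat.card {j // b j < 1} :=
  quadric_hessian_index_general n b hb hb1 D hD J hJ
end

section
/- Let m > 0 be a real number, n ≥ 1, and a : Fin n → ℂ. Let D be the diagonal matrix with entries 2·i·a_j and let J be the 2n×2n complex block matrix [[−m·I, D], [Dᴴ, −m·I]]. Then J is singular (det J = 0) if and only if there exists an index j with |a_j| = m/2. (This characterizes when 0 is a degenerate critical point of a section s of O(m) with f_s = 1 + Σ a_j z_j² + higher order terms.) -/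
/-!
The diagonal blocks of `J` are the scalar `-m`, so the Schur complement gives
`det J = det (m² - Dᴴ D) = ∏ j, (m² - 4 ‖a j‖²)`, and `m > 0` turns the vanishing of a factor
into `‖a j‖ = m / 2`.
-/

open Matrix Complex

namespace Matrix

variable {ι K : Type*} [Fintype ι] [DecidableEq ι] [Field K]

theorem det_fromBlocks_smul_one {c : K} (hc : c ≠ 0) (B C : Matrix ι ι K) :
    (fromBlocks (c • 1) B C (c • 1)).det = (c ^ 2 • 1 - C * B).det := by
  have : Invertible (c • 1 : Matrix ι ι K) :=
    invertibleOfIsUnitDet _ (by simpa [det_smul] using (Ne.isUnit hc).pow _)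
  have hinv : ⅟(c • 1 : Matrix ι ι K) = c⁻¹ • 1 :=
    invOf_eq_right_inv (by rw [smul_mul_smul, one_mul, mul_inv_cancel₀ hc, one_smul])
  rw [det_fromBlocks₁₁, hinv, ← det_mul]
  congr 1
  simp [mul_sub, smul_smul, sq, hc]

theorem det_fromBlocks_smul_one_diagonal {c : K} (hc : c ≠ 0) (b d : ι → K) :
    (fromBlocks (c • 1) (diagonal b) (diagonal d) (c • 1)).det = ∏ i, (c ^ 2 - d i * b i) := by
  rw [det_fromBlocks_smul_one hc, smul_one_eq_diagonal, diagonal_mul_diagonal, diagonal_sub,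
    det_diagonal]

end Matrix

theorem sq_sub_star_two_I_mul_eq_zero_iff {m : ℝ} (hm : 0 ≤ m) (z : ℂ) :
    (-(m : ℂ)) ^ 2 - star (2 * I * z) * (2 * I * z) = 0 ↔ ‖z‖ = m / 2 := by
  rw [sub_eq_zero, star_def, conj_mul', neg_sq, norm_mul, norm_mul, norm_I, mul_one]
  norm_cast
  rw [sq_eq_sq₀ hm (by positivity)]
  constructor <;> intro h <;> linarith

theorem hessian_degenerate_iff_general (n : ℕ) (m : ℝ) (hm : 0 < m)
    (a : Fin n → ℂ)
    (D : Matrix (Fin n) (Fin n) ℂ)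
    (hD : D = Matrix.diagonal fun j => 2 * Complex.I * a j)
    (J : Matrix (Fin n ⊕ Fin n) (Fin n ⊕ Fin n) ℂ)
    (hJ : J = Matrix.fromBlocks ((-(m : ℂ)) • 1) D Dᴴ ((-(m : ℂ)) • 1)) :
    J.det = 0 ↔ ∃ j, ‖a j‖ = m / 2 := by
  have hm' : -(m : ℂ) ≠ 0 := neg_ne_zero.mpr (ofReal_ne_zero.mpr hm.ne')
  rw [hJ, hD, diagonal_conjTranspose, det_fromBlocks_smul_one_diagonal hm',
    Finset.prod_eq_zero_iff]
  simp only [Finset.mem_univ, true_and, Pi.star_apply,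
    sq_sub_star_two_I_mul_eq_zero_iff hm.le]

/-- Degeneracy criterion: for `m > 0` and `D = diag(2i a_j)`, the block matrix
`J = [[−mI, D], [Dᴴ, −mI]]` is singular iff some `|a_j| = m/2`. -/
theorem hessian_degenerate_iff (n : ℕ) (hn : 1 ≤ n) (m : ℝ) (hm : 0 < m)
    (a : Fin n → ℂ)
    (D : Matrix (Fin n) (Fin n) ℂ)
    (hD : D = Matrix.diagonal fun j => 2 * Complex.I * a j)
    (J : Matrix (Fin n ⊕ Fin n) (Fin n ⊕ Fin n) ℂ)
    (hJ : J = Matrix.fromBlocks ((-(m : ℂ)) • 1) D Dᴴ ((-(m : ℂ)) • 1)) :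
    J.det = 0 ↔ ∃ j, ‖a j‖ = m / 2 :=
  hessian_degenerate_iff_general n m hm a D hD J hJ
end

section
/- Let n ≥ 1, m ≥ 2, let p : Fin n → ℂ be nonzero, and let ξ : Fin n → ℂ be arbitrary. Then there exists a polynomial f in the variables z_1, …, z_n over ℂ with total degree at most m, whose homogeneous degree-one part vanishes (the coefficient of each monomial z_i is zero), such that f(p) = 0 and ∂f/∂z_i(p) = ξ_i for every i. -/
/-!
Choose a linear form `λ` with `λ(p) = 1` and put `ℓ = ∑ ξ_k z_k`, `c = ℓ(p)`. By Leibniz's rule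
the gradient of `ℓ λ` at `p` is `ξ + c ∇λ`; subtracting `(c/2)(λ² + 1)` removes the excess
`c ∇λ` and the value `c` at `p`, and adds only a quadratic form and a constant, so no linear term.
-/

open MvPolynomial Matrix

namespace MvPolynomial

variable {R σ : Type*}

section LinearForm

variable [CommSemiring R] [Fintype σ]

noncomputable def linearForm (v : σ → R) : MvPolynomial σ R := ∑ k, C (v k) * X k

theorem isHomogeneous_linearForm (v : σ → R) : (linearForm v).IsHomogeneous 1 :=
  IsHomogeneous.sum _ _ _ fun k _ => isHomogeneous_C_mul_X (v k) k

theorem eval_linearForm (v p : σ → R) : eval p (linearForm v) = v ⬝ᵥ p := by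
  simp [linearForm, dotProduct]

theorem pderiv_linearForm (v : σ → R) (i : σ) : pderiv i (linearForm v) = C (v i) := by
  classical
  simp [linearForm, pderiv_X, Pi.single_apply]

end LinearForm

section HomogeneousAddC

variable [CommSemiring R] {q : MvPolynomial σ R} {n : ℕ}

theorem IsHomogeneous.totalDegree_add_C_le (hq : q.IsHomogeneous n) (a : R) :
    (q + C a).totalDegree ≤ n :=
  (totalDegree_add _ _).trans <|
    max_le hq.totalDegree_le ((totalDegree_C a).trans_le (Nat.zero_le n))

theorem IsHomogeneous.coeff_add_C_eq_zero (hq : q.IsHomogeneous n) (a : R) {d : σ →₀ ℕ}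
    (hdn : d.degree ≠ n) (hd : d ≠ 0) : (q + C a).coeff d = 0 := by
  classical
  rw [coeff_add, hq.coeff_eq_zero hdn, coeff_C, if_neg (Ne.symm hd), add_zero]

end HomogeneousAddC

theorem exists_isHomogeneous_two_add_C_eval_eq_zero_eval_pderiv_eq {K : Type*} [Field K]
    [Fintype σ] (h2 : (2 : K) ≠ 0) {p v : σ → K} (hv : v ⬝ᵥ p = 1) (ξ : σ → K) :
    ∃ (q : MvPolynomial σ K) (a : K), q.IsHomogeneous 2 ∧ eval p (q + C a) = 0 ∧
      ∀ i, eval p (pderiv i (q + C a)) = ξ i := by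
  obtain ⟨c, hc⟩ : ∃ c, ξ ⬝ᵥ p = c := ⟨_, rfl⟩
  refine ⟨linearForm ξ * linearForm v - C (c / 2) * linearForm v ^ 2, -(c / 2), ?_, ?_, ?_⟩
  · exact ((isHomogeneous_linearForm ξ).mul (isHomogeneous_linearForm v)).sub
      (((isHomogeneous_linearForm v).pow 2).C_mul _)
  · simp only [map_add, map_sub, map_mul, map_pow, eval_C, eval_linearForm, hv, hc]
    field_simp
    ring
  · intro i
    simp only [map_add, map_sub, map_mul, Derivation.leibniz, pow_two,
      pderiv_C, pderiv_linearForm, smul_eq_mul, eval_C, eval_linearForm, hv, hc]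
    field_simp
    ring

end MvPolynomial

theorem exists_section_vanishing_with_gradient_general (n m : ℕ) (hm : 2 ≤ m)
    (p : Fin n → ℂ) (hp : p ≠ 0) (ξ : Fin n → ℂ) :
    ∃ f : MvPolynomial (Fin n) ℂ,
      f.totalDegree ≤ m ∧
      (∀ i : Fin n, f.coeff (Finsupp.single i 1) = 0) ∧
      MvPolynomial.eval p f = 0 ∧
      ∀ i : Fin n, MvPolynomial.eval p (MvPolynomial.pderiv i f) = ξ i := by
  obtain ⟨j, hj⟩ := Function.ne_iff.mp hp
  have hv : Pi.single j (p j)⁻¹ ⬝ᵥ p = 1 := by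
    rw [single_dotProduct, inv_mul_cancel₀ hj]
  obtain ⟨q, a, hq, hval, hgrad⟩ :=
    exists_isHomogeneous_two_add_C_eval_eq_zero_eval_pderiv_eq two_ne_zero hv ξ
  refine ⟨q + C a, (hq.totalDegree_add_C_le a).trans hm,
    fun i => hq.coeff_add_C_eq_zero a (by simp) (by simp), hval, hgrad⟩

/-- For any nonzero `p ∈ ℂⁿ` and any covector `ξ`, there is a polynomial `f` of total degree
at most `m ≥ 2` with no linear term such that `f(p) = 0` and `∂f/∂z_i(p) = ξ_i` for all `i`. -/
theorem exists_section_vanishing_with_gradient (n m : ℕ) (hn : 1 ≤ n) (hm : 2 ≤ m)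
    (p : Fin n → ℂ) (hp : p ≠ 0) (ξ : Fin n → ℂ) :
    ∃ f : MvPolynomial (Fin n) ℂ,
      f.totalDegree ≤ m ∧
      (∀ i : Fin n, f.coeff (Finsupp.single i 1) = 0) ∧
      MvPolynomial.eval p f = 0 ∧
      ∀ i : Fin n, MvPolynomial.eval p (MvPolynomial.pderiv i f) = ξ i :=
  exists_section_vanishing_with_gradient_general n m hm p hp ξ
end

section
/- Let n ≥ 1 and let Z : Fin (n+1) → ℂ be nonzero. Then Z satisfies the critical point equations of the Fermat quadric section s = Σ_j Z_j² of O(2) over ℂP^n, namely Z_i · (Σ_j |Z_j|²) = (Σ_j Z_j²) · conj(Z_i) for every i, if and only if there exist λ ∈ ℂ and a real vector r : Fin (n+1) → ℝ such that Z_i = λ·r_i for all i. (Hence the critical set of the Fermat quadric section in ℂP^n is exactly the real projective space ℝP^n of real points.) -/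
open Complex Finset

open scoped ComplexConjugate

/-!
Write `N = Σ |Z_j|²` and `c = Σ Z_j²`. Multiplying the `i`-th equation `Z_i N = c conj Z_i` by
`conj Z_i` and summing over `i` gives `N² = |c|²`. Hence, for `Z ≠ 0`, `u² = c / N` has a root
`u` on the unit circle (for `Z = 0` take `u = 1`), and the equations read `Z_i = u² conj Z_i`,
which says exactly that each `conj u · Z_i` is real, i.e. `Z = u · r` with `r` real.
-/

theorem eq_mul_ofReal_re_of_eq_sq_mul_conj {z w : ℂ} (hw : normSq w = 1)
    (h : z = w ^ 2 * conj z) : z = w * ((conj w * z).re : ℂ) := by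
  have hw' : w * conj w = 1 := by rw [mul_conj, hw, ofReal_one]
  have hreal : conj (conj w * z) = conj w * z := by
    rw [map_mul, conj_conj]
    linear_combination (-conj w) * h - (w * conj z) * hw'
  rw [conj_eq_iff_re.mp hreal, ← mul_assoc, hw', one_mul]

section

variable {ι : Type*} [Fintype ι] {Z : ι → ℂ}

theorem normSq_sum_sq_eq_sq_sum_normSq_of_critical
    (h : ∀ i, Z i * ∑ j, (normSq (Z j) : ℂ) = (∑ j, Z j ^ 2) * conj (Z i)) :
    normSq (∑ j, Z j ^ 2) = (∑ j, normSq (Z j)) ^ 2 := by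
  have hsum : ∑ i, Z i * conj (Z i) * ∑ j, (normSq (Z j) : ℂ) =
      ∑ i, (∑ j, Z j ^ 2) * conj (Z i) ^ 2 :=
    sum_congr rfl fun i _ => by linear_combination conj (Z i) * h i
  simp only [← sum_mul, ← mul_sum, ← map_pow, ← map_sum, mul_conj] at hsum
  exact_mod_cast (sq _).trans hsum |>.symm

theorem exists_normSq_eq_one_forall_eq_sq_mul_conj_of_critical
    (h : ∀ i, Z i * ∑ j, (normSq (Z j) : ℂ) = (∑ j, Z j ^ 2) * conj (Z i)) :
    ∃ u : ℂ, normSq u = 1 ∧ ∀ i, Z i = u ^ 2 * conj (Z i) := by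
  set N := ∑ j, normSq (Z j) with hN
  by_cases hN0 : N = 0
  · have hZ : ∀ i, Z i = 0 := fun i => normSq_eq_zero.mp <|
      (sum_eq_zero_iff_of_nonneg fun j _ => normSq_nonneg (Z j)).mp hN0 i (mem_univ i)
    exact ⟨1, map_one normSq, fun i => by simp [hZ i]⟩
  obtain ⟨u, hu⟩ := IsAlgClosed.exists_pow_nat_eq ((∑ j, Z j ^ 2) / N) two_pos
  have hNc : (N : ℂ) ≠ 0 := ofReal_ne_zero.mpr hN0
  refine ⟨u, ?_, fun i => ?_⟩
  · have hu2 : normSq u ^ 2 = 1 := by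
      rw [← map_pow, hu, normSq_div, normSq_ofReal,
        normSq_sum_sq_eq_sq_sum_normSq_of_critical h, ← sq, div_self (pow_ne_zero 2 hN0)]
    exact (pow_eq_one_iff_of_nonneg (normSq_nonneg u) two_ne_zero).mp hu2
  · rw [hu]
    field_simp
    push_cast [hN] at hNc ⊢
    linear_combination h i

theorem critical_of_eq_mul_ofReal {lam : ℂ} {r : ι → ℝ} (hr : ∀ i, Z i = lam * (r i : ℂ))
    (i : ι) :
    Z i * ∑ j, (normSq (Z j) : ℂ) = (∑ j, Z j ^ 2) * conj (Z i) := by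
  simp only [hr, normSq_ofReal, ← mul_conj, map_mul, conj_ofReal, ofReal_mul]
  simp only [mul_pow, ← sq, ← mul_sum]
  ring

end

theorem fermat_quadric_critical_points_general (n : ℕ)
    (Z : Fin (n + 1) → ℂ) :
    (∀ i, Z i * (∑ j, (Complex.normSq (Z j) : ℂ)) =
        (∑ j, Z j ^ 2) * (starRingEnd ℂ) (Z i)) ↔
      ∃ (lam : ℂ) (r : Fin (n + 1) → ℝ), ∀ i, Z i = lam * (r i : ℂ) := by
  refine ⟨fun h => ?_, fun ⟨_, _, hr⟩ => critical_of_eq_mul_ofReal hr⟩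
  obtain ⟨u, hu, hZ⟩ := exists_normSq_eq_one_forall_eq_sq_mul_conj_of_critical h
  exact ⟨u, _, fun i => eq_mul_ofReal_re_of_eq_sq_mul_conj hu (hZ i)⟩

/-- The critical set of the Fermat quadric section `s = Σ_j Z_j²` of `O(2)` over `ℂP^n`
is exactly the real projective space: a nonzero `Z` satisfies the critical point equations
iff `Z` is a complex multiple of a real vector. -/
theorem fermat_quadric_critical_points (n : ℕ) (hn : 1 ≤ n)
    (Z : Fin (n + 1) → ℂ) (hZ : Z ≠ 0) :
    (∀ i, Z i * (∑ j, (Complex.normSq (Z j) : ℂ)) =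
        (∑ j, Z j ^ 2) * (starRingEnd ℂ) (Z i)) ↔
      ∃ (lam : ℂ) (r : Fin (n + 1) → ℝ), ∀ i, Z i = lam * (r i : ℂ) :=
  fermat_quadric_critical_points_general n Z
end
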